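/- Let R be a commutative ring, and for a ∈ R let σ_a : R[ε] → R[ε] be the R-algebra endomorphism with σ_a(ε) = a·ε. Then a ↦ σ_a defines an action making the kernel of K^M_{n+1}(R[ε]) → K^M_{n+1}(R) into an R-module, provided R contains 1/2 and is weakly 5-fold stable; on generators it acts by a · {1 + s·r₁⋯r_n·ε, r₁, …, r_n} = {1 + a·s·r₁⋯r_n·ε, r₁, …, r_n}. -/

import Mathlib

open TrivSqZeroExt

/-- The relations defining the Milnor K-group of a commutative ring `S`:
multilinearity relations and Steinberg relations (a generator `r₁ ⊗ … ⊗ r_n` with some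
pair of consecutive entries summing to `1`). -/
def milnorRelSet (S : Type*) [CommRing S] (n : ℕ) : Set (FreeAbelianGroup (Fin n → Sˣ)) :=
  {x | ∃ (f : Fin n → Sˣ) (i : Fin n) (u v : Sˣ),
      x = FreeAbelianGroup.of (Function.update f i (u * v))
        - FreeAbelianGroup.of (Function.update f i u)
        - FreeAbelianGroup.of (Function.update f i v)} ∪
  {x | ∃ (f : Fin n → Sˣ) (i j : Fin n), (i : ℕ) + 1 = (j : ℕ) ∧
      ((f i : S) + (f j : S) = 1) ∧ x = FreeAbelianGroup.of f}

/-- The `n`-th Milnor K-group of a commutative ring `S`: the quotient of `(Sˣ)^{⊗ n}`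
(presented as the free abelian group on `n`-tuples of units, modulo multilinearity)
by the Steinberg relations. -/
def MilnorK (S : Type*) [CommRing S] (n : ℕ) : Type _ :=
  FreeAbelianGroup (Fin n → Sˣ) ⧸ AddSubgroup.closure (milnorRelSet S n)

instance (S : Type*) [CommRing S] (n : ℕ) : AddCommGroup (MilnorK S n) :=
  QuotientAddGroup.Quotient.addCommGroup _

/-- The Milnor symbol `{r₁, …, r_n}`. -/
def milnorSymbol {S : Type*} [CommRing S] {n : ℕ} (f : Fin n → Sˣ) : MilnorK S n :=
  QuotientAddGroup.mk (FreeAbelianGroup.of f)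

/-- Functoriality of Milnor K-groups in ring homomorphisms. -/
def MilnorK.map {S T : Type*} [CommRing S] [CommRing T] (φ : S →+* T) (n : ℕ) :
    MilnorK S n →+ MilnorK T n := by
  refine QuotientAddGroup.lift _
    ((QuotientAddGroup.mk' (AddSubgroup.closure (milnorRelSet T n))).comp
      (FreeAbelianGroup.map (fun f => (Units.map (φ : S →* T)) ∘ f))) ?_
  intro x hx
  revert x hx
  rw [← SetLike.le_def, AddSubgroup.closure_le]
  rintro x (⟨f, i, u, v, rfl⟩ | ⟨f, i, j, hij, hsum, rfl⟩) <;>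
    simp only [SetLike.mem_coe, AddMonoidHom.mem_ker, map_sub]
  · show milnorSymbol (Units.map (φ : S →* T) ∘ Function.update f i (u * v))
      - milnorSymbol (Units.map (φ : S →* T) ∘ Function.update f i u)
      - milnorSymbol (Units.map (φ : S →* T) ∘ Function.update f i v) = (0 : MilnorK T n)
    show (QuotientAddGroup.mk (FreeAbelianGroup.of (Units.map (φ : S →* T) ∘ Function.update f i (u * v))
      - FreeAbelianGroup.of (Units.map (φ : S →* T) ∘ Function.update f i u)
      - FreeAbelianGroup.of (Units.map (φ : S →* T) ∘ Function.update f i v)) :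
        FreeAbelianGroup (Fin n → Tˣ) ⧸ AddSubgroup.closure (milnorRelSet T n)) = 0
    rw [QuotientAddGroup.eq_zero_iff]
    refine AddSubgroup.subset_closure (Or.inl ⟨Units.map (φ : S →* T) ∘ f, i,
      Units.map (φ : S →* T) u, Units.map (φ : S →* T) v, ?_⟩)
    simp [Function.comp_update]
  · show milnorSymbol (Units.map (φ : S →* T) ∘ f) = (0 : MilnorK T n)
    show (QuotientAddGroup.mk (FreeAbelianGroup.of (Units.map (φ : S →* T) ∘ f)) :
        FreeAbelianGroup (Fin n → Tˣ) ⧸ AddSubgroup.closure (milnorRelSet T n)) = 0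
    rw [QuotientAddGroup.eq_zero_iff]
    refine AddSubgroup.subset_closure (Or.inr ⟨Units.map (φ : S →* T) ∘ f, i, j, hij, ?_, rfl⟩)
    simp only [Function.comp_apply, Units.coe_map, MonoidHom.coe_coe]
    rw [← map_add, hsum, map_one]

/-- The unit `1 + r·ε` of the dual numbers, with inverse `1 - r·ε`. -/
def oneAddEps (R : Type*) [CommRing R] (r : R) : (DualNumber R)ˣ where
  val := 1 + inr r
  inv := 1 - inr r
  val_inv := by
    have h : (inr r : DualNumber R) * inr r = 0 := inr_mul_inr R r r
    ring_nf
    simp [pow_two, h]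
  inv_val := by
    have h : (inr r : DualNumber R) * inr r = 0 := inr_mul_inr R r r
    ring_nf
    simp [pow_two, h]

/-- The `R`-algebra endomorphism `σ_a` of the dual numbers sending `ε` to `a·ε`. -/
def epsScale (R : Type*) [CommRing R] (a : R) : DualNumber R →+* DualNumber R where
  toFun x := inl x.fst + inr (a * x.snd)
  map_one' := by simp
  map_mul' x y := by
    ext
    · simp
    · simp [snd_mul, smul_eq_mul, mul_comm, mul_add]
      ring
  map_zero' := by simp
  map_add' x y := by ext <;> simp [mul_add]

/-- A commutative ring `R` is weakly `k`-fold stable if for any `k - 1` elements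
there is a unit `r` such that adding `r` to each of them yields a unit. -/
def WeaklyStable (R : Type*) [CommRing R] (k : ℕ) : Prop :=
  ∀ r : Fin (k - 1) → R, ∃ u : Rˣ, ∀ i, IsUnit (r i + (u : R))


/-!
Write every unit of `R[ε]` as `c (1 + tε)` with `c ∈ Rˣ`. Multilinearity expands a symbol
`{c₁(1 + t₁ε), …, cₘ(1 + tₘε)}` into the symbol of the constants plus terms in which some slots are
of the form `1 + sε`. Every term with two such slots vanishes: for adjacent slots this comes from
the Steinberg relations `{c(1 + αε), d(1 + βε)} = 0` with `c + d = 1`, using `1/2` and weak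
stability, and otherwise the `ε` is moved slot by slot through the same relations. The surviving
terms carry a single `ε`, on which `σ_a` acts additively in `a`; hence
`σ_{a+b} + σ_0 = σ_a + σ_b`, and `σ_0` vanishes on the kernel.
-/

open Function

section MilnorSymbol

variable {S : Type*} [CommRing S] {m : ℕ}

theorem milnorSymbol_update_mul (f : Fin m → Sˣ) (i : Fin m) (u v : Sˣ) :
    milnorSymbol (update f i (u * v))
      = milnorSymbol (update f i u) + milnorSymbol (update f i v) := by
  have h : (QuotientAddGroup.mk (FreeAbelianGroup.of (update f i (u * v))
      - FreeAbelianGroup.of (update f i u) - FreeAbelianGroup.of (update f i v)) :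
        MilnorK S m) = 0 :=
    (QuotientAddGroup.eq_zero_iff _).mpr (AddSubgroup.subset_closure (Or.inl ⟨f, i, u, v, rfl⟩))
  rwa [QuotientAddGroup.mk_sub, QuotientAddGroup.mk_sub, sub_sub, sub_eq_zero] at h

theorem milnorSymbol_eq_zero_of_add_eq_one {f : Fin m → Sˣ} {i j : Fin m}
    (hij : (i : ℕ) + 1 = j) (hsum : (f i : S) + f j = 1) : milnorSymbol f = 0 :=
  (QuotientAddGroup.eq_zero_iff _).mpr
    (AddSubgroup.subset_closure (Or.inr ⟨f, i, j, hij, hsum, rfl⟩))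

theorem milnorSymbol_eq_zero_of_eq_one {f : Fin m → Sˣ} {i : Fin m} (h : f i = 1) :
    milnorSymbol f = 0 := by
  have := milnorSymbol_update_mul f i 1 1
  rwa [one_mul, ← h, update_eq_self, left_eq_add] at this

namespace MilnorK

theorem hom_ext {A : Type*} [AddCommGroup A] {g₁ g₂ : MilnorK S m →+ A}
    (h : ∀ f, g₁ (milnorSymbol f) = g₂ (milnorSymbol f)) : g₁ = g₂ :=
  QuotientAddGroup.addMonoidHom_ext _ (FreeAbelianGroup.lift_ext _ _ h)

variable {T U : Type*} [CommRing T] [CommRing U]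

theorem map_milnorSymbol (φ : S →+* T) (f : Fin m → Sˣ) :
    map φ m (milnorSymbol f) = milnorSymbol (Units.map (φ : S →* T) ∘ f) :=
  rfl

theorem map_comp (φ : S →+* T) (ψ : T →+* U) :
    map (ψ.comp φ) m = (map ψ m).comp (map φ m) :=
  hom_ext fun _ => rfl

theorem map_id : map (RingHom.id S) m = AddMonoidHom.id _ :=
  hom_ext fun _ => rfl

end MilnorK

end MilnorSymbol

/-- `B` has the formal properties of the Steinberg symbol `(u, v) ↦ {u, v}`. -/
structure IsSteinbergPairing {S A : Type*} [CommRing S] [AddCommGroup A]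
    (B : Sˣ → Sˣ → A) : Prop where
  map_mul_left : ∀ u u' v, B (u * u') v = B u v + B u' v
  map_mul_right : ∀ u v v', B u (v * v') = B u v + B u v'
  eq_zero_of_add_eq_one : ∀ u v : Sˣ, (u : S) + v = 1 → B u v = 0

theorem isSteinbergPairing_update {S : Type*} [CommRing S] {m : ℕ} (f : Fin m → Sˣ)
    {i j : Fin m} (hij : (i : ℕ) + 1 = j) :
    IsSteinbergPairing fun u v => milnorSymbol (update (update f i u) j v) := by
  have hne : i ≠ j := Fin.ne_of_val_ne (by omega)
  refine ⟨fun u u' v => ?_, fun u v v' => milnorSymbol_update_mul _ j _ _, fun u v h => ?_⟩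
  · rw [update_comm hne (u * u') v f, update_comm hne u v f, update_comm hne u' v f]
    exact milnorSymbol_update_mul _ i _ _
  · refine milnorSymbol_eq_zero_of_add_eq_one hij ?_
    rwa [update_self, update_of_ne hne, update_self]

section WeaklyStable

variable {R : Type*} [CommRing R]

theorem WeaklyStable.mono {k l : ℕ} (hkl : k ≤ l) (h : WeaklyStable R l) :
    WeaklyStable R k := by
  intro r
  obtain ⟨u, hu⟩ := h fun i => if hi : (i : ℕ) < k - 1 then r ⟨i, hi⟩ else 0
  exact ⟨u, fun i => by simpa [i.isLt] using hu ⟨i, by omega⟩⟩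

theorem WeaklyStable.exists_units_add_eq (h : WeaklyStable R 2) (a : R) :
    ∃ u v : Rˣ, (u : R) + v = a := by
  obtain ⟨w, hw⟩ := h fun _ => -a
  obtain ⟨v, hv⟩ := hw 0
  exact ⟨w, -v, by rw [Units.val_neg, hv]; ring⟩

theorem WeaklyStable.exists_mul_eq (h : WeaklyStable R 3) (u : Rˣ) :
    ∃ d₁ d₂ : Rˣ, IsUnit (1 - (d₁ : R)) ∧ IsUnit (1 - (d₂ : R)) ∧ d₁ * d₂ = u := by
  obtain ⟨w, hw⟩ := h ![-1, -(u : R)]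
  refine ⟨w, w⁻¹ * u, ?_, ?_, by rw [mul_inv_cancel_left]⟩
  · simpa [neg_add_eq_sub] using (hw 0).neg
  · have : 1 - ((w⁻¹ * u : Rˣ) : R) = (w⁻¹ : Rˣ) * (-(u : R) + w) := by
      rw [Units.val_mul, mul_add, Units.inv_mul]; ring
    rw [this]
    exact (Units.isUnit _).mul (by simpa using hw 1)

/-- A unit `μ` is exceptional when `1 - μ` is a unit too. Taking `μ = -1` makes `Q` antisymmetric;
weak stability writes every element as a sum of products of exceptional units, which makes `Q`
symmetric. -/
theorem eq_zero_of_skew_of_exceptional [Invertible (2 : R)] (hst : WeaklyStable R 3)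
    {A : Type*} [AddCommGroup A] (Q : R →+ R →+ A)
    (hQ : ∀ μ : Rˣ, IsUnit (1 - (μ : R)) → ∀ x y, Q x (μ * y) + Q y (μ * x) = 0) (x y : R) :
    Q x y = 0 := by
  have antisymm : ∀ x y, Q x y = -Q y x := by
    intro x y
    have h2 : IsUnit (1 - ((-1 : Rˣ) : R)) := by
      rw [Units.val_neg, Units.val_one, sub_neg_eq_add, one_add_one_eq_two]
      exact isUnit_of_invertible 2
    have h := hQ (-1) h2 x y
    simp only [Units.val_neg, Units.val_one, neg_one_mul, map_neg] at h
    rw [← neg_add, neg_eq_zero] at h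
    exact eq_neg_of_add_eq_zero_left h
  have exceptional : ∀ μ : Rˣ, IsUnit (1 - (μ : R)) → ∀ x y, Q (μ * x) y = Q x (μ * y) := by
    intro μ hμ x y
    rw [antisymm, neg_eq_iff_add_eq_zero, add_comm]
    exact hQ μ hμ x y
  have balanced : ∀ a x y, Q (a * x) y = Q x (a * y) := by
    intro a x y
    obtain ⟨u, v, rfl⟩ := (hst.mono (by norm_num)).exists_units_add_eq a
    obtain ⟨d₁, d₂, h₁, h₂, rfl⟩ := hst.exists_mul_eq u
    obtain ⟨e₁, e₂, h₁', h₂', rfl⟩ := hst.exists_mul_eq v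
    simp only [add_mul, map_add, AddMonoidHom.add_apply, Units.val_mul, mul_assoc,
      exceptional _ h₁, exceptional _ h₂, exceptional _ h₁', exceptional _ h₂']
    congr 2 <;> ring
  have two_torsion : ∀ x y, (2 : ℕ) • Q x y = 0 := by
    intro x y
    have symm : Q x y = Q y x := by
      have hx := balanced x 1 y
      have hy := balanced y 1 x
      rw [mul_one] at hx hy
      rw [hx, hy, mul_comm]
    rw [two_nsmul]
    nth_rewrite 1 [symm]
    rw [antisymm y x, neg_add_cancel]
  calc Q x y = Q ((2 : ℕ) • (⅟2 * x)) y := by rw [nsmul_eq_mul, ← mul_assoc]; simp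
    _ = 0 := by rw [map_nsmul, AddMonoidHom.nsmul_apply, two_torsion]

end WeaklyStable

section DualNumber

variable {R : Type*} [CommRing R]

def inlUnit (c : Rˣ) : (DualNumber R)ˣ :=
  Units.map (algebraMap R (DualNumber R)).toMonoidHom c

@[simp] theorem val_inlUnit (c : Rˣ) : (inlUnit c : DualNumber R) = inl (c : R) := rfl

@[simp] theorem inlUnit_mul (c d : Rˣ) : (inlUnit (c * d) : (DualNumber R)ˣ) = inlUnit c * inlUnit d :=
  map_mul _ c d

@[simp] theorem val_oneAddEps (t : R) : (oneAddEps R t : DualNumber R) = 1 + inr t := rfl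

theorem oneAddEps_add (s t : R) : oneAddEps R (s + t) = oneAddEps R s * oneAddEps R t :=
  Units.ext <| by
    rw [Units.val_mul, val_oneAddEps, val_oneAddEps, val_oneAddEps, mul_add, mul_one, add_mul,
      one_mul, inr_mul_inr, add_zero, inr_add, add_assoc]

@[simp] theorem oneAddEps_zero : oneAddEps R 0 = 1 :=
  Units.ext <| by rw [val_oneAddEps, inr_zero, add_zero, Units.val_one]

theorem val_inlUnit_mul_oneAddEps (c : Rˣ) (t : R) :
    ((inlUnit c * oneAddEps R t : (DualNumber R)ˣ) : DualNumber R) = inl (c : R) + inr (c * t) := by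
  rw [Units.val_mul, val_inlUnit, val_oneAddEps, mul_add, mul_one, inl_mul_inr, smul_eq_mul]

theorem exists_eq_inlUnit_mul_oneAddEps (u : (DualNumber R)ˣ) :
    ∃ (c : Rˣ) (t : R), u = inlUnit c * oneAddEps R t := by
  obtain ⟨c, hc⟩ : IsUnit (u : DualNumber R).fst :=
    (Units.map (fstHom R R R).toRingHom.toMonoidHom u).isUnit
  refine ⟨c, (c⁻¹ : Rˣ) * (u : DualNumber R).snd, Units.ext ?_⟩
  rw [val_inlUnit_mul_oneAddEps, Units.mul_inv_cancel_left, hc, inl_fst_add_inr_snd_eq]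

theorem epsScale_apply (a : R) (w : DualNumber R) :
    epsScale R a w = inl w.fst + inr (a * w.snd) := rfl

theorem epsScale_one : epsScale R 1 = RingHom.id (DualNumber R) :=
  RingHom.ext fun w => by rw [epsScale_apply, one_mul, inl_fst_add_inr_snd_eq, RingHom.id_apply]

theorem epsScale_comp (a b : R) : (epsScale R a).comp (epsScale R b) = epsScale R (a * b) :=
  RingHom.ext fun w => by simp [epsScale_apply, mul_assoc]

theorem epsScale_zero :
    epsScale R 0 = (algebraMap R (DualNumber R)).comp (fstHom R R R).toRingHom :=
  RingHom.ext fun w => by rw [epsScale_apply, zero_mul, inr_zero, add_zero]; rfl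

theorem fstHom_comp_epsScale (a : R) :
    (fstHom R R R).toRingHom.comp (epsScale R a) = (fstHom R R R).toRingHom :=
  RingHom.ext fun w => by simp [epsScale_apply]

theorem units_map_epsScale_inlUnit (a : R) (c : Rˣ) :
    Units.map (epsScale R a : DualNumber R →* DualNumber R) (inlUnit c) = inlUnit c :=
  Units.ext <| by simp [epsScale_apply]

theorem units_map_epsScale_oneAddEps (a t : R) :
    Units.map (epsScale R a : DualNumber R →* DualNumber R) (oneAddEps R t)
      = oneAddEps R (a * t) :=
  Units.ext <| by simp [epsScale_apply]

end DualNumber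

namespace IsSteinbergPairing

variable {R A : Type*} [CommRing R] [AddCommGroup A] {B : (DualNumber R)ˣ → (DualNumber R)ˣ → A}

theorem oneAddEps_add_left (hB : IsSteinbergPairing B) (s t : R) (v : (DualNumber R)ˣ) :
    B (oneAddEps R (s + t)) v = B (oneAddEps R s) v + B (oneAddEps R t) v := by
  rw [oneAddEps_add, hB.map_mul_left]

theorem oneAddEps_add_right (hB : IsSteinbergPairing B) (u : (DualNumber R)ˣ) (s t : R) :
    B u (oneAddEps R (s + t)) = B u (oneAddEps R s) + B u (oneAddEps R t) := by
  rw [oneAddEps_add, hB.map_mul_right]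

/-- The Steinberg relation for `c (1 + αε) + d (1 + βε) = 1`, expanded. -/
theorem deformed_steinberg (hB : IsSteinbergPairing B) {c d : Rˣ} (hcd : (c : R) + d = 1)
    {α β : R} (hαβ : c * α + d * β = 0) :
    B (inlUnit c) (oneAddEps R β) + B (oneAddEps R α) (inlUnit d)
      + B (oneAddEps R α) (oneAddEps R β) = 0 := by
  have hcd' : B (inlUnit c) (inlUnit d) = 0 :=
    hB.eq_zero_of_add_eq_one _ _ (by rw [val_inlUnit, val_inlUnit, ← inl_add, hcd, inl_one])
  have h := hB.eq_zero_of_add_eq_one (inlUnit c * oneAddEps R α) (inlUnit d * oneAddEps R β)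
    (by rw [val_inlUnit_mul_oneAddEps, val_inlUnit_mul_oneAddEps, add_add_add_comm, ← inl_add,
      ← inr_add, hcd, hαβ, inl_one, inr_zero, add_zero])
  rw [hB.map_mul_left, hB.map_mul_right, hB.map_mul_right, hcd'] at h
  rw [← h]
  abel

theorem oneAddEps_oneAddEps [Invertible (2 : R)] (hst : WeaklyStable R 3)
    (hB : IsSteinbergPairing B) (s t : R) : B (oneAddEps R s) (oneAddEps R t) = 0 := by
  let Q : R →+ R →+ A := AddMonoidHom.mk'
    (fun x => AddMonoidHom.mk' (fun y => B (oneAddEps R x) (oneAddEps R y))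
      (hB.oneAddEps_add_right _))
    (fun x y => AddMonoidHom.ext fun z => hB.oneAddEps_add_left x y _)
  refine eq_zero_of_skew_of_exceptional hst Q (fun μ hμ x y => ?_) s t
  -- `c = -μ / (1 - μ)` and `d = 1 / (1 - μ)` satisfy `c + d = 1` and `c + d μ = 0`.
  set e := hμ.unit
  have hcd : ((-(μ * e⁻¹) : Rˣ) : R) + (e⁻¹ : Rˣ) = 1 := by
    have := e.mul_inv
    rw [IsUnit.unit_spec] at this
    push_cast
    linear_combination this
  have h := fun α => hB.deformed_steinberg hcd (α := α) (β := μ * α) (by push_cast; ring)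
  have hxy := h (x + y)
  simp only [mul_add, hB.oneAddEps_add_left, hB.oneAddEps_add_right] at hxy
  show B _ _ + B _ _ = 0
  linear_combination (norm := abel) hxy - h x - h y

theorem oneAddEps_inlUnit [Invertible (2 : R)] (hst : WeaklyStable R 3)
    (hB : IsSteinbergPairing B) {c d : Rˣ} (hcd : (c : R) + d = 1) {α β : R}
    (hαβ : c * α + d * β = 0) :
    B (oneAddEps R α) (inlUnit d) = -B (inlUnit c) (oneAddEps R β) := by
  have h := hB.deformed_steinberg hcd hαβ
  rw [hB.oneAddEps_oneAddEps hst, add_zero] at h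
  exact eq_neg_of_add_eq_zero_right h

end IsSteinbergPairing

section TwoEpsilonSlots

variable {R : Type*} [CommRing R] [Invertible (2 : R)] {m : ℕ}

/-- Moving the `ε` of slot `i` onto the constant in slot `i + 1` (through a Steinberg relation
with `c + d = 1`) brings the two `ε`-slots closer together, until they are adjacent. -/
theorem milnorSymbol_eq_zero_of_lt (hst : WeaklyStable R 3) {g : Fin m → (DualNumber R)ˣ}
    {i j : Fin m} (hij : i < j) {s t : R} (hi : g i = oneAddEps R s)
    (hj : g j = oneAddEps R t) : milnorSymbol g = 0 := by
  obtain ⟨k, hk⟩ : ∃ k, (i : ℕ) + 1 + k = j := ⟨j - i - 1, by omega⟩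
  induction k generalizing g i s with
  | zero =>
    have hB := isSteinbergPairing_update g (show (i : ℕ) + 1 = j by omega)
    have h := hB.oneAddEps_oneAddEps hst s t
    rwa [← hi, ← hj, update_eq_self, update_eq_self] at h
  | succ k ih =>
    set p : Fin m := ⟨i + 1, by omega⟩
    have hip : (i : ℕ) + 1 = p := rfl
    have hpj : p ≠ j := Fin.ne_of_val_ne (by simp only [p]; omega)
    have hB := isSteinbergPairing_update g hip
    obtain ⟨c, r, hc⟩ := exists_eq_inlUnit_mul_oneAddEps (g p)
    have key : ∀ d : Rˣ, IsUnit (1 - (d : R)) →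
        milnorSymbol (update (update g i (oneAddEps R s)) p (inlUnit d)) = 0 := by
      intro d hd
      have hcd : (hd.unit : R) + d = 1 := by rw [IsUnit.unit_spec, sub_add_cancel]
      rw [hB.oneAddEps_inlUnit hst hcd (β := -((d⁻¹ : Rˣ) * (hd.unit * s)))
        (by rw [mul_neg, Units.mul_inv_cancel_left, add_neg_cancel]), neg_eq_zero]
      refine ih (i := p) (by simp only [p, Fin.lt_def]; omega) (update_self _ _ _) ?_ (by omega)
      rw [update_of_ne hpj.symm, update_of_ne (by omega), hj]
    obtain ⟨d₁, d₂, h₁, h₂, rfl⟩ := hst.exists_mul_eq c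
    have hg : milnorSymbol g = milnorSymbol (update (update g i (oneAddEps R s)) p
        (inlUnit (d₁ * d₂) * oneAddEps R r)) := by
      rw [← hi, ← hc, update_eq_self, update_eq_self]
    rw [hg, hB.map_mul_right, hB.oneAddEps_oneAddEps hst, add_zero, inlUnit_mul,
      hB.map_mul_right, key d₁ h₁, key d₂ h₂, add_zero]

theorem milnorSymbol_eq_zero_of_ne (hst : WeaklyStable R 3) {g : Fin m → (DualNumber R)ˣ}
    {i j : Fin m} (hij : i ≠ j) {s t : R} (hi : g i = oneAddEps R s)
    (hj : g j = oneAddEps R t) : milnorSymbol g = 0 := by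
  rcases hij.lt_or_gt with h | h
  · exact milnorSymbol_eq_zero_of_lt hst h hi hj
  · exact milnorSymbol_eq_zero_of_lt hst h hj hi

end TwoEpsilonSlots

theorem eq_apply_zero_of_forall_update_zero {ι M β : Type*} [Fintype ι] [DecidableEq ι] [Zero M]
    (F : (ι → M) → β) (hF : ∀ t i, F (update t i 0) = F t) (t : ι → M) : F t = F 0 := by
  suffices h : ∀ s : Finset ι, F (s.piecewise 0 t) = F t by
    rw [← h Finset.univ, Finset.piecewise_univ]
  intro s
  induction s using Finset.induction_on with
  | empty => rw [Finset.piecewise_empty]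
  | insert i s _ ih => rw [Finset.piecewise_insert, Pi.zero_apply, hF, ih]

section Expansion

variable {R : Type*} [CommRing R] {m : ℕ}

/-- Every tuple of units of `R[ε]` is of this form, and `ε ↦ aε` acts on it by `t ↦ a • t`. -/
def dualUnits (c : Fin m → Rˣ) (t : Fin m → R) : Fin m → (DualNumber R)ˣ :=
  fun i => inlUnit (c i) * oneAddEps R (t i)

theorem dualUnits_apply (c : Fin m → Rˣ) (t : Fin m → R) (i : Fin m) :
    dualUnits c t i = inlUnit (c i) * oneAddEps R (t i) := rfl

theorem dualUnits_zero (c : Fin m → Rˣ) : dualUnits c 0 = inlUnit ∘ c :=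
  funext fun i => by rw [dualUnits_apply, Pi.zero_apply, oneAddEps_zero, mul_one, comp_apply]

theorem dualUnits_update_zero (c : Fin m → Rˣ) (t : Fin m → R) (k : Fin m) :
    dualUnits c (update t k 0) = update (dualUnits c t) k (inlUnit (c k)) := by
  funext i
  rcases eq_or_ne i k with rfl | h
  · rw [update_self, dualUnits_apply, update_self, oneAddEps_zero, mul_one]
  · rw [update_of_ne h, dualUnits_apply, dualUnits_apply, update_of_ne h]

variable [Invertible (2 : R)]

theorem milnorSymbol_update_dualUnits (hst : WeaklyStable R 3) (c : Fin m → Rˣ)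
    (t : Fin m → R) (j : Fin m) (τ : R) :
    milnorSymbol (update (dualUnits c t) j (oneAddEps R τ))
      = milnorSymbol (update (inlUnit ∘ c) j (oneAddEps R τ)) := by
  rw [← dualUnits_zero]
  refine eq_apply_zero_of_forall_update_zero
    (fun t => milnorSymbol (update (dualUnits c t) j (oneAddEps R τ))) (fun t k => ?_) t
  rw [dualUnits_update_zero]
  rcases eq_or_ne k j with rfl | hkj
  · rw [update_idem]
  · set g := update (dualUnits c t) j (oneAddEps R τ)
    have hgk : g k = inlUnit (c k) * oneAddEps R (t k) := update_of_ne hkj _ _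
    have hε : milnorSymbol (update g k (oneAddEps R (t k))) = 0 :=
      milnorSymbol_eq_zero_of_ne hst hkj (update_self _ _ _)
        (by rw [update_of_ne hkj.symm]; exact update_self _ _ _)
    rw [update_comm hkj, ← add_zero (milnorSymbol (update g k _)), ← hε,
      ← milnorSymbol_update_mul, ← hgk, update_eq_self]

theorem milnorSymbol_dualUnits_eq_update_zero_add (hst : WeaklyStable R 3) (c : Fin m → Rˣ)
    (t : Fin m → R) (k : Fin m) :
    milnorSymbol (dualUnits c t) = milnorSymbol (dualUnits c (update t k 0))
      + milnorSymbol (update (inlUnit ∘ c) k (oneAddEps R (t k))) := by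
  rw [← milnorSymbol_update_dualUnits hst c t, dualUnits_update_zero,
    ← milnorSymbol_update_mul, ← dualUnits_apply, update_eq_self]

/-- Each term of the expansion carries at most one `ε`, hence is additive in the scaling. -/
theorem milnorSymbol_dualUnits_add_smul (hst : WeaklyStable R 3) (c : Fin m → Rˣ)
    (t : Fin m → R) (a b : R) :
    milnorSymbol (dualUnits c ((a + b) • t)) + milnorSymbol (dualUnits c 0)
      = milnorSymbol (dualUnits c (a • t)) + milnorSymbol (dualUnits c (b • t)) := by
  rw [← sub_eq_zero]
  refine (eq_apply_zero_of_forall_update_zero (fun t =>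
    milnorSymbol (dualUnits c ((a + b) • t)) + milnorSymbol (dualUnits c 0)
      - (milnorSymbol (dualUnits c (a • t)) + milnorSymbol (dualUnits c (b • t))))
    (fun t k => ?_) t).trans (by simp only [smul_zero, sub_self])
  have hsplit := fun x : R => milnorSymbol_dualUnits_eq_update_zero_add hst c (x • t) k
  have hadd : milnorSymbol (update (inlUnit ∘ c) k (oneAddEps R (((a + b) • t) k)))
      = milnorSymbol (update (inlUnit ∘ c) k (oneAddEps R ((a • t) k)))
        + milnorSymbol (update (inlUnit ∘ c) k (oneAddEps R ((b • t) k))) := by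
    rw [Pi.smul_apply, add_smul, oneAddEps_add, milnorSymbol_update_mul]; rfl
  have hsmul : ∀ x : R, x • update t k 0 = update (x • t) k 0 := fun x => by
    rw [← update_smul, smul_zero]
  simp only [hsmul]
  rw [hsplit (a + b), hsplit a, hsplit b, hadd]
  abel

end Expansion

namespace MilnorK

variable {R : Type*} [CommRing R] {m : ℕ}

theorem map_epsScale_add [Invertible (2 : R)] (hst : WeaklyStable R 3) (a b : R) :
    map (epsScale R (a + b)) m + map (epsScale R 0) m
      = map (epsScale R a) m + map (epsScale R b) m := by
  refine hom_ext fun f => ?_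
  choose c t hf using fun i => exists_eq_inlUnit_mul_oneAddEps (f i)
  have hmap : ∀ x : R, Units.map (epsScale R x : DualNumber R →* DualNumber R) ∘ f
      = dualUnits c (x • t) := fun x => funext fun i => by
    rw [comp_apply, hf, map_mul, units_map_epsScale_inlUnit, units_map_epsScale_oneAddEps]; rfl
  simp only [AddMonoidHom.add_apply, map_milnorSymbol, hmap, zero_smul]
  exact milnorSymbol_dualUnits_add_smul hst c t a b

theorem map_epsScale_cons_oneAddEps (a t : R) (r : Fin m → Rˣ) :
    map (epsScale R a) (m + 1) (milnorSymbol (Fin.cons (oneAddEps R t) (inlUnit ∘ r)))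
      = milnorSymbol (Fin.cons (oneAddEps R (a * t)) (inlUnit ∘ r)) := by
  rw [map_milnorSymbol, Fin.comp_cons, units_map_epsScale_oneAddEps]
  congr 2
  exact funext fun i => units_map_epsScale_inlUnit a (r i)

variable (R m)

/-- `TK^M_m(R)`, the kernel of `K^M_m(R[ε]) → K^M_m(R)`. -/
abbrev tangent : AddSubgroup (MilnorK (DualNumber R) m) :=
  (map (fstHom R R R).toRingHom m).ker

theorem map_epsScale_mem_tangent (a : R) {x : MilnorK (DualNumber R) m} (hx : x ∈ tangent R m) :
    map (epsScale R a) m x ∈ tangent R m := by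
  rw [AddMonoidHom.mem_ker, ← AddMonoidHom.comp_apply, ← map_comp, fstHom_comp_epsScale]
  exact hx

theorem map_epsScale_zero_eq_zero {x : MilnorK (DualNumber R) m} (hx : x ∈ tangent R m) :
    map (epsScale R 0) m x = 0 := by
  rw [epsScale_zero, map_comp, AddMonoidHom.comp_apply, hx, map_zero]

def tangentSMul (a : R) : AddMonoid.End (tangent R m) :=
  ((map (epsScale R a) m).comp (tangent R m).subtype).codRestrict _
    fun x => map_epsScale_mem_tangent R m a x.2

def tangentSMulHom [Invertible (2 : R)] (hst : WeaklyStable R 3) :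
    R →+* AddMonoid.End (tangent R m) where
  toFun := tangentSMul R m
  map_one' := AddMonoidHom.ext fun x => Subtype.ext <| by
    show map (epsScale R 1) m x = x
    rw [epsScale_one, map_id, AddMonoidHom.id_apply]
  map_mul' a b := AddMonoidHom.ext fun x => Subtype.ext <| by
    show map (epsScale R (a * b)) m x = map (epsScale R a) m (map (epsScale R b) m x)
    rw [← epsScale_comp, map_comp, AddMonoidHom.comp_apply]
  map_zero' := AddMonoidHom.ext fun x => Subtype.ext <|
    map_epsScale_zero_eq_zero R m x.2
  map_add' a b := AddMonoidHom.ext fun x => Subtype.ext <| by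
    have h := congrArg (· (x : MilnorK (DualNumber R) m)) (map_epsScale_add hst a b)
    simp only [AddMonoidHom.add_apply, map_epsScale_zero_eq_zero R m x.2, add_zero] at h
    exact h

end MilnorK

set_option synthInstance.maxHeartbeats 1000000 in
/-- for `R` containing `1/2` and weakly 5-fold stable, the assignment
`a ↦ (induced action of σ_a : ε ↦ a·ε)` defines an `R`-module structure (a ring
homomorphism `R → End(TK^M_{n+1}(R))`) on the kernel `TK^M_{n+1}(R)` of
`K^M_{n+1}(R[ε]) → K^M_{n+1}(R)`, acting on generators by
`a · {1 + s·r₁⋯r_n·ε, r₁, …, r_n} = {1 + a·s·r₁⋯r_n·ε, r₁, …, r_n}`. -/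
theorem stmt_19 (R : Type*) [CommRing R] [Invertible (2 : R)]
    (hst : WeaklyStable R 5) (n : ℕ) :
    ∃ ρ : R →+* AddMonoid.End
        ((MilnorK.map (TrivSqZeroExt.fstHom R R R).toRingHom (n + 1)).ker),
      (∀ (a : R) (x : (MilnorK.map (TrivSqZeroExt.fstHom R R R).toRingHom (n + 1)).ker),
          ((ρ a x : (MilnorK.map (TrivSqZeroExt.fstHom R R R).toRingHom (n + 1)).ker) :
              MilnorK (DualNumber R) (n + 1))
            = MilnorK.map (epsScale R a) (n + 1) (x : MilnorK (DualNumber R) (n + 1))) ∧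
      (∀ (a s : R) (r : Fin n → Rˣ),
          MilnorK.map (epsScale R a) (n + 1)
              (milnorSymbol (Fin.cons (oneAddEps R (s * ∏ i, (r i : R)))
                (fun i => Units.map (algebraMap R (DualNumber R)).toMonoidHom (r i))))
            = milnorSymbol (Fin.cons (oneAddEps R (a * s * ∏ i, (r i : R)))
                (fun i => Units.map (algebraMap R (DualNumber R)).toMonoidHom (r i)))) := by
  refine ⟨MilnorK.tangentSMulHom R (n + 1) (hst.mono (by norm_num)), fun _ _ => rfl,
    fun a s r => ?_⟩
  rw [mul_assoc]
  exact MilnorK.map_epsScale_cons_oneAddEps a _ r
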